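/- If ‖P r‖ > q‖r‖ where P is the orthogonal projector onto (range J)ᗮ and q ∈ (0,1), then there is no λ > 0 with ‖r + J p(λ)‖ = q‖r‖, where p(λ) = -(JᵀJ + λI)⁻¹Jᵀr. -/

import Mathlib

open Matrix Finset

noncomputable def eucEnorm {n : ℕ} (v : Fin n → ℝ) : ℝ := Real.sqrt (∑ i, v i ^ 2)

noncomputable def specNorm {n : ℕ} (A : Matrix (Fin n) (Fin n) ℝ) : ℝ :=
  sSup ((fun v => eucEnorm (A.mulVec v)) '' {v | eucEnorm v ≤ 1})

noncomputable def pstep {n : ℕ} (J : Matrix (Fin n) (Fin n) ℝ) (r : Fin n → ℝ) (lam : ℝ) :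
    Fin n → ℝ :=
  -((Jᵀ * J + lam • (1 : Matrix (Fin n) (Fin n) ℝ))⁻¹.mulVec (Jᵀ.mulVec r))

theorem stmt_6 {n : ℕ} (J : Matrix (Fin n) (Fin n) ℝ) (r Pr : Fin n → ℝ)
    (hg : Jᵀ.mulVec r ≠ 0)
    (hproj₁ : ∃ w, r - Pr = J.mulVec w)
    (hproj₂ : ∀ v, J.mulVec v ⬝ᵥ Pr = 0)
    (q : ℝ) (hq : q ∈ Set.Ioo (0 : ℝ) 1)
    (hPr : eucEnorm Pr > q * eucEnorm r) :
    ¬ ∃ lam : ℝ, 0 < lam ∧ eucEnorm (r + J.mulVec (pstep J r lam)) = q * eucEnorm r := by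
  rintro ⟨lam, hlam, heq⟩
  obtain ⟨w, hw⟩ := hproj₁
  set p := pstep J r lam with hp
  set b := J.mulVec (w + p) with hb
  have hr : r + J.mulVec p = Pr + b := by
    rw [hb, Matrix.mulVec_add]
    have : r = Pr + J.mulVec w := by rw [← hw]; abel
    rw [this]; abel
  have hdot : ∑ i, b i * Pr i = 0 := hproj₂ (w + p)
  have key : eucEnorm Pr ≤ eucEnorm (r + J.mulVec p) := by
    rw [hr]
    unfold eucEnorm
    apply Real.sqrt_le_sqrt
    have expand : ∑ i, (Pr i + b i) ^ 2
        = ∑ i, Pr i ^ 2 + ∑ i, b i ^ 2 + 2 * ∑ i, b i * Pr i := by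
      rw [Finset.mul_sum, ← Finset.sum_add_distrib, ← Finset.sum_add_distrib]
      exact Finset.sum_congr rfl fun i _ => by ring
    simp only [Pi.add_apply]
    rw [expand, hdot]
    have : (0:ℝ) ≤ ∑ i, b i ^ 2 := Finset.sum_nonneg fun i _ => sq_nonneg _
    linarith
  rw [heq] at key
  linarith
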